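/- Dynamic programming principle for the discrete infinite-horizon LQ problem. Let (Q_j)_{j∈ℕ⁺} ∈ M_{ħ,≫}(H) and (R_j)_{j∈ℕ⁺} ∈ M_{ħ,≫}(U), and assume U_ad(x_0) ≠ ∅ for every x_0 ∈ H. Then for all ℓ, k ∈ ℕ with k > ℓ and every x_0 ∈ H, V(x_0;ℓ) = inf over u = (u_{j+ℓ})_{j∈ℕ⁺} ∈ l²(ℕ⁺;U) of { Σ_{j=ℓ+1}^{k} (⟨Q_j x(t_j;x_0,u,ℓ), x(t_j;x_0,u,ℓ)⟩_H + ⟨R_j u_j, u_j⟩_U) + V(x(t_k^+;x_0,u,ℓ); k) }. -/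

import Mathlib

open scoped RealInnerProductSpace
noncomputable section

namespace ImpulseControl

/-- adjoint of a continuous linear map between real Hilbert spaces -/
def adj {E F : Type*} [NormedAddCommGroup E] [InnerProductSpace ℝ E] [CompleteSpace E]
    [NormedAddCommGroup F] [InnerProductSpace ℝ F] [CompleteSpace F]
    (f : E →L[ℝ] F) : F →L[ℝ] E :=
  ContinuousLinearMap.adjoint f

/-- `ν(j) = j - [j/ħ]·ħ ∈ {1,…,ħ}` (where `[s] = max {k ∈ ℕ : k < s}`):
equals `ħ` when `ħ ∣ j`, else `j % ħ`. -/
def nu (hbar j : ℕ) : ℕ := if j % hbar = 0 then hbar else j % hbar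

variable {H U : Type*} [NormedAddCommGroup H] [InnerProductSpace ℝ H] [CompleteSpace H]
  [NormedAddCommGroup U] [InnerProductSpace ℝ U] [CompleteSpace U]

/-- a bounded self-adjoint nonnegative operator: membership in `SL₊` -/
def IsNonnegOp {E : Type*} [NormedAddCommGroup E] [InnerProductSpace ℝ E] [CompleteSpace E]
    (P : E →L[ℝ] E) : Prop :=
  IsSelfAdjoint P ∧ ∀ x : E, 0 ≤ ⟪P x, x⟫

/-- membership in `SL_≫`: self-adjoint, nonnegative and coercive -/
def IsCoerciveOp {E : Type*} [NormedAddCommGroup E] [InnerProductSpace ℝ E] [CompleteSpace E]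
    (P : E →L[ℝ] E) : Prop :=
  IsNonnegOp P ∧ ∃ δ : ℝ, 0 < δ ∧ ∀ x : E, δ * ‖x‖ ^ 2 ≤ ⟪P x, x⟫

/-- `M_{ħ,+}`: an `ħ`-periodic sequence of self-adjoint nonnegative operators (indices `j ≥ 1`). -/
def MemMPlus {E : Type*} [NormedAddCommGroup E] [InnerProductSpace ℝ E] [CompleteSpace E]
    (hbar : ℕ) (Q : ℕ → E →L[ℝ] E) : Prop :=
  (∀ j : ℕ, 1 ≤ j → IsNonnegOp (Q j)) ∧ ∀ j : ℕ, 1 ≤ j → Q (j + hbar) = Q j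

/-- `M_{ħ,≫}`: an `ħ`-periodic sequence of self-adjoint coercive operators (indices `j ≥ 1`). -/
def MemMCoercive {E : Type*} [NormedAddCommGroup E] [InnerProductSpace ℝ E] [CompleteSpace E]
    (hbar : ℕ) (Q : ℕ → E →L[ℝ] E) : Prop :=
  (∀ j : ℕ, 1 ≤ j → IsCoerciveOp (Q j)) ∧ ∀ j : ℕ, 1 ≤ j → Q (j + hbar) = Q j

section Defs

variable (T : ℝ → H →L[ℝ] H) (t : ℕ → ℝ) (hbar : ℕ) (B : ℕ → U →L[ℝ] H)

/-- post-impulse states: `xplusFrom T t ħ B ℓ x0 u m = x(t_{ℓ+m}^+ ; x0, u, ℓ)`. -/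
def xplusFrom (ℓ : ℕ) (x0 : H) (u : ℕ → U) : ℕ → H
  | 0 => x0
  | m + 1 => T (t (ℓ + m + 1) - t (ℓ + m)) (xplusFrom ℓ x0 u m)
      + B (nu hbar (ℓ + m + 1)) (u (ℓ + m + 1))

/-- pre-impulse states: `xtrajFrom T t ħ B ℓ x0 u m = x(t_{ℓ+m} ; x0, u, ℓ)` for `m ≥ 1`. -/
def xtrajFrom (ℓ : ℕ) (x0 : H) (u : ℕ → U) : ℕ → H
  | 0 => x0
  | m + 1 => T (t (ℓ + m + 1) - t (ℓ + m)) (xplusFrom T t hbar B ℓ x0 u m)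

/-- `x(t_j^+ ; x0, u)` -/
def xplus (x0 : H) (u : ℕ → U) : ℕ → H := xplusFrom T t hbar B 0 x0 u

/-- `x(t_j ; x0, u)` for `j ≥ 1` -/
def xtraj (x0 : H) (u : ℕ → U) : ℕ → H := xtrajFrom T t hbar B 0 x0 u

/-- the shifted admissible control set `U_ad(x0; ℓ)`; `U_ad(x0) = UadFrom T t ħ B 0 x0` -/
def UadFrom (ℓ : ℕ) (x0 : H) : Set (ℕ → U) :=
  {u | Summable (fun j : ℕ => ‖u (ℓ + j + 1)‖ ^ 2) ∧
       Summable (fun j : ℕ => ‖xtrajFrom T t hbar B ℓ x0 u (j + 1)‖ ^ 2)}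

/-- exponential `ħ`-stabilizability of `[A, B_ħ, Λ_ħ]` by an `ħ`-periodic feedback law:
every closed-loop trajectory decays like `C e^{-μ t}`. -/
def ExpStabilizable : Prop :=
  ∃ F : ℕ → H →L[ℝ] U, ∃ C μ : ℝ, 0 < C ∧ 0 < μ ∧
    ∀ (x0 : H) (u : ℕ → U),
      (∀ j : ℕ, 1 ≤ j → u j = F (nu hbar j) (xtraj T t hbar B x0 u j)) →
      ∀ (j : ℕ) (s : ℝ), t j < s → s ≤ t (j + 1) →
        ‖T (s - t j) (xplus T t hbar B x0 u j)‖ ≤ C * Real.exp (-μ * s) * ‖x0‖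

/-- the infinite-horizon cost `J(u; x0, ℓ)` -/
def Jinf (Q : ℕ → H →L[ℝ] H) (R : ℕ → U →L[ℝ] U) (ℓ : ℕ) (x0 : H) (u : ℕ → U) : ℝ :=
  ∑' m : ℕ,
    (⟪Q (ℓ + m + 1) (xtrajFrom T t hbar B ℓ x0 u (m + 1)), xtrajFrom T t hbar B ℓ x0 u (m + 1)⟫
      + ⟪R (ℓ + m + 1) (u (ℓ + m + 1)), u (ℓ + m + 1)⟫)

/-- the infinite-horizon value function `V(x0; ℓ)` -/
def Vinf (Q : ℕ → H →L[ℝ] H) (R : ℕ → U →L[ℝ] U) (ℓ : ℕ) (x0 : H) : ℝ :=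
  sInf {c : ℝ | ∃ u ∈ UadFrom T t hbar B ℓ x0, c = Jinf T t hbar B Q R ℓ x0 u}

/-- the finite-horizon cost `J(u; x0, ℓ, k̂)` with terminal weight `M` -/
def Jfin (Q : ℕ → H →L[ℝ] H) (R : ℕ → U →L[ℝ] U) (M : H →L[ℝ] H)
    (ℓ khat : ℕ) (x0 : H) (u : ℕ → U) : ℝ :=
  (∑ m ∈ Finset.Icc 1 (khat - ℓ),
    (⟪Q (ℓ + m) (xtrajFrom T t hbar B ℓ x0 u m), xtrajFrom T t hbar B ℓ x0 u m⟫
      + ⟪R (ℓ + m) (u (ℓ + m)), u (ℓ + m)⟫))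
  + ⟪M (xplusFrom T t hbar B ℓ x0 u (khat - ℓ)), xplusFrom T t hbar B ℓ x0 u (khat - ℓ)⟫

/-- the finite-horizon value function `V(x0; ℓ, k̂)` with terminal weight `M` -/
def Vfin (Q : ℕ → H →L[ℝ] H) (R : ℕ → U →L[ℝ] U) (M : H →L[ℝ] H)
    (ℓ khat : ℕ) (x0 : H) : ℝ :=
  sInf {c : ℝ | ∃ u : ℕ → U, Summable (fun j : ℕ => ‖u (ℓ + j + 1)‖ ^ 2) ∧
    c = Jfin T t hbar B Q R M ℓ khat x0 u}

/-- the `k`-th equation of the periodic Riccati-type system, where `G` is the (two-sided)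
inverse of `R_k + B_k* P_k B_k`. -/
def RicEq (Q : ℕ → H →L[ℝ] H) (R : ℕ → U →L[ℝ] U) (P : ℕ → H →L[ℝ] H)
    (G : U →L[ℝ] U) (k : ℕ) : Prop :=
  G ∘L (R k + adj (B k) ∘L P k ∘L B k) = 1 ∧
  (R k + adj (B k) ∘L P k ∘L B k) ∘L G = 1 ∧
  P (k - 1) - adj (T (t k - t (k - 1))) ∘L P k ∘L T (t k - t (k - 1)) =
    adj (T (t k - t (k - 1))) ∘L Q k ∘L T (t k - t (k - 1))
      - adj (T (t k - t (k - 1))) ∘L P k ∘L B k ∘L G ∘L adj (B k) ∘L P k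
          ∘L T (t k - t (k - 1))

/-- `P_0, …, P_ħ` is a solution of the periodic Riccati-type equation. -/
def IsRicSol (Q : ℕ → H →L[ℝ] H) (R : ℕ → U →L[ℝ] U) (P : ℕ → H →L[ℝ] H) : Prop :=
  (∀ k : ℕ, k ≤ hbar → IsNonnegOp (P k)) ∧ P 0 = P hbar ∧
  ∀ k : ℕ, 1 ≤ k → k ≤ hbar → ∃ G : U →L[ℝ] U, RicEq T t B Q R P G k

end Defs

/-! ### Auxiliary lemmas -/

section Aux

set_option linter.unusedSectionVars false

variable {H U : Type*} [NormedAddCommGroup H] [InnerProductSpace ℝ H] [CompleteSpace H]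
  [NormedAddCommGroup U] [InnerProductSpace ℝ U] [CompleteSpace U]
  (T : ℝ → H →L[ℝ] H) (t : ℕ → ℝ) (hbar : ℕ) (B : ℕ → U →L[ℝ] H)

lemma xplusFrom_shift (ℓ n0 : ℕ) (x0 : H) (u : ℕ → U) (m : ℕ) :
    xplusFrom T t hbar B (ℓ + n0) (xplusFrom T t hbar B ℓ x0 u n0) u m
      = xplusFrom T t hbar B ℓ x0 u (n0 + m) := by
  induction m with
  | zero => rfl
  | succ m ih =>
    show T (t (ℓ + n0 + m + 1) - t (ℓ + n0 + m)) _
        + B (nu hbar (ℓ + n0 + m + 1)) (u (ℓ + n0 + m + 1))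
      = xplusFrom T t hbar B ℓ x0 u ((n0 + m) + 1)
    rw [ih]
    show _ = T (t (ℓ + (n0 + m) + 1) - t (ℓ + (n0 + m))) _
        + B (nu hbar (ℓ + (n0 + m) + 1)) (u (ℓ + (n0 + m) + 1))
    rw [Nat.add_assoc ℓ n0 m]

lemma xtrajFrom_shift (ℓ n0 : ℕ) (x0 : H) (u : ℕ → U) (m : ℕ) :
    xtrajFrom T t hbar B (ℓ + n0) (xplusFrom T t hbar B ℓ x0 u n0) u (m + 1)
      = xtrajFrom T t hbar B ℓ x0 u (n0 + m + 1) := by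
  show T (t (ℓ + n0 + m + 1) - t (ℓ + n0 + m)) _
      = xtrajFrom T t hbar B ℓ x0 u ((n0 + m) + 1)
  rw [xplusFrom_shift]
  show _ = T (t (ℓ + (n0 + m) + 1) - t (ℓ + (n0 + m))) _
  rw [Nat.add_assoc ℓ n0 m]

lemma xplusFrom_congr (ℓ : ℕ) (x0 : H) (u v : ℕ → U) (m : ℕ)
    (h : ∀ i, ℓ < i → i ≤ ℓ + m → u i = v i) :
    xplusFrom T t hbar B ℓ x0 u m = xplusFrom T t hbar B ℓ x0 v m := by
  induction m with
  | zero => rfl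
  | succ m ih =>
    show T _ (xplusFrom T t hbar B ℓ x0 u m) + B _ (u (ℓ + m + 1))
      = T _ (xplusFrom T t hbar B ℓ x0 v m) + B _ (v (ℓ + m + 1))
    rw [ih (fun i h1 h2 => h i h1 (by omega)), h (ℓ + m + 1) (by omega) (by omega)]

lemma xtrajFrom_congr (ℓ : ℕ) (x0 : H) (u v : ℕ → U) (m : ℕ)
    (h : ∀ i, ℓ < i → i ≤ ℓ + m → u i = v i) :
    xtrajFrom T t hbar B ℓ x0 u (m + 1) = xtrajFrom T t hbar B ℓ x0 v (m + 1) := by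
  show T _ (xplusFrom T t hbar B ℓ x0 u m) = T _ (xplusFrom T t hbar B ℓ x0 v m)
  rw [xplusFrom_congr T t hbar B ℓ x0 u v m (fun i h1 h2 => h i h1 (by omega))]

/-- shifting the whole problem by one period -/
lemma uad_shift_up (hhbar : 0 < hbar) (htper : ∀ j : ℕ, t (j + hbar) = t j + t hbar)
    (ℓ : ℕ) (y : H) (hne : (UadFrom T t hbar B ℓ y).Nonempty) :
    (UadFrom T t hbar B (ℓ + hbar) y).Nonempty := by
  obtain ⟨u, hu1, hu2⟩ := hne
  refine ⟨fun j => u (j - hbar), ?_, ?_⟩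
  · have e : ∀ j : ℕ, ℓ + hbar + j + 1 - hbar = ℓ + j + 1 := fun j => by omega
    simpa only [e] using hu1
  · have key : ∀ m, xplusFrom T t hbar B (ℓ + hbar) y (fun j => u (j - hbar)) m
        = xplusFrom T t hbar B ℓ y u m := by
      intro m
      induction m with
      | zero => rfl
      | succ m ih =>
        show T (t (ℓ + hbar + m + 1) - t (ℓ + hbar + m)) _
            + B (nu hbar (ℓ + hbar + m + 1)) (u (ℓ + hbar + m + 1 - hbar))
          = T (t (ℓ + m + 1) - t (ℓ + m)) _ + B (nu hbar (ℓ + m + 1)) (u (ℓ + m + 1))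
        rw [ih]
        have e1 : t (ℓ + hbar + m + 1) = t (ℓ + m + 1) + t hbar := by
          rw [show ℓ + hbar + m + 1 = (ℓ + m + 1) + hbar by omega, htper]
        have e2 : t (ℓ + hbar + m) = t (ℓ + m) + t hbar := by
          rw [show ℓ + hbar + m = (ℓ + m) + hbar by omega, htper]
        have e3 : nu hbar (ℓ + hbar + m + 1) = nu hbar (ℓ + m + 1) := by
          unfold nu
          rw [show ℓ + hbar + m + 1 = (ℓ + m + 1) + hbar by omega, Nat.add_mod_right]
        have e4 : ℓ + hbar + m + 1 - hbar = ℓ + m + 1 := by omega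
        rw [e1, e2, e3, e4]
        ring_nf
    have keyt : ∀ m, xtrajFrom T t hbar B (ℓ + hbar) y (fun j => u (j - hbar)) (m + 1)
        = xtrajFrom T t hbar B ℓ y u (m + 1) := by
      intro m
      show T (t (ℓ + hbar + m + 1) - t (ℓ + hbar + m)) _
        = T (t (ℓ + m + 1) - t (ℓ + m)) _
      rw [key]
      have e1 : t (ℓ + hbar + m + 1) = t (ℓ + m + 1) + t hbar := by
        rw [show ℓ + hbar + m + 1 = (ℓ + m + 1) + hbar by omega, htper]
      have e2 : t (ℓ + hbar + m) = t (ℓ + m) + t hbar := by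
        rw [show ℓ + hbar + m = (ℓ + m) + hbar by omega, htper]
      rw [e1, e2]
      ring_nf
    simpa only [keyt] using hu2

/-- prepending a zero control step -/
lemma uad_prepend (hT0 : T 0 = 1) (ℓ : ℕ) (y : H)
    (hne : (UadFrom T t hbar B (ℓ + 1) (T (t (ℓ + 1) - t ℓ) y)).Nonempty) :
    (UadFrom T t hbar B ℓ y).Nonempty := by
  obtain ⟨u, hu1, hu2⟩ := hne
  set z : H := T (t (ℓ + 1) - t ℓ) y with hz
  set v : ℕ → U := fun j => if j = ℓ + 1 then 0 else u j with hv
  have hv1 : xplusFrom T t hbar B ℓ y v 1 = z := by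
    show T (t (ℓ + 0 + 1) - t (ℓ + 0)) y + B (nu hbar (ℓ + 0 + 1)) (v (ℓ + 0 + 1)) = z
    have : v (ℓ + 0 + 1) = 0 := by simp [hv]
    rw [this, map_zero, add_zero]
    simp only [Nat.add_zero]
    exact hz.symm
  have keyp : ∀ m, xplusFrom T t hbar B ℓ y v (1 + m) = xplusFrom T t hbar B (ℓ + 1) z u m := by
    intro m
    rw [← xplusFrom_shift T t hbar B ℓ 1 y v m, hv1]
    exact xplusFrom_congr T t hbar B (ℓ + 1) z v u m (fun i h1 h2 => by
      simp only [hv]; rw [if_neg (by omega)])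
  have keyt : ∀ m, xtrajFrom T t hbar B ℓ y v (1 + m + 1)
      = xtrajFrom T t hbar B (ℓ + 1) z u (m + 1) := by
    intro m
    rw [← xtrajFrom_shift T t hbar B ℓ 1 y v m, hv1]
    exact xtrajFrom_congr T t hbar B (ℓ + 1) z v u m (fun i h1 h2 => by
      simp only [hv]; rw [if_neg (by omega)])
  refine ⟨v, ?_, ?_⟩
  · rw [← summable_nat_add_iff 1]
    convert hu1 using 2 with j
    show ‖v (ℓ + (j + 1) + 1)‖ ^ 2 = ‖u (ℓ + 1 + j + 1)‖ ^ 2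
    have : v (ℓ + (j + 1) + 1) = u (ℓ + 1 + j + 1) := by
      simp only [hv]; rw [if_neg (by omega)]; congr 1; omega
    rw [this]
    rfl
  · rw [← summable_nat_add_iff 1]
    convert hu2 using 2 with j
    show ‖xtrajFrom T t hbar B ℓ y v (j + 1 + 1)‖ ^ 2 = _
    rw [show j + 1 + 1 = 1 + j + 1 by omega, keyt j]
    rfl

/-- going down from a later time -/
lemma uad_down (hT0 : T 0 = 1)
    (hTadd : ∀ a b : ℝ, 0 ≤ a → 0 ≤ b → T (a + b) = T a ∘L T b)
    (htmono : StrictMono t) :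
    ∀ (d ℓ : ℕ) (y : H),
      (UadFrom T t hbar B (ℓ + d) (T (t (ℓ + d) - t ℓ) y)).Nonempty →
      (UadFrom T t hbar B ℓ y).Nonempty := by
  intro d
  induction d with
  | zero =>
    intro ℓ y h
    simpa [sub_self, hT0] using h
  | succ d ih =>
    intro ℓ y h
    apply ih ℓ y
    apply uad_prepend T t hbar B hT0 (ℓ + d)
    have hcomp : T (t (ℓ + d + 1) - t (ℓ + d)) (T (t (ℓ + d) - t ℓ) y)
        = T (t (ℓ + (d + 1)) - t ℓ) y := by
      have h1 : (0:ℝ) ≤ t (ℓ + d + 1) - t (ℓ + d) := by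
        have := htmono (show ℓ + d < ℓ + d + 1 by omega); linarith
      have h2 : (0:ℝ) ≤ t (ℓ + d) - t ℓ := by
        rcases Nat.eq_zero_or_pos d with hd | hd
        · subst hd; simp
        · have := htmono (show ℓ < ℓ + d by omega); linarith
      have := hTadd _ _ h1 h2
      rw [show t (ℓ + d + 1) - t (ℓ + d) + (t (ℓ + d) - t ℓ) = t (ℓ + (d+1)) - t ℓ by
        rw [show ℓ + (d+1) = ℓ + d + 1 from rfl]; ring] at this
      rw [this]; rfl
    rw [hcomp]
    exact h

lemma uad_nonempty (hT0 : T 0 = 1)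
    (hTadd : ∀ a b : ℝ, 0 ≤ a → 0 ≤ b → T (a + b) = T a ∘L T b)
    (hhbar : 0 < hbar) (htmono : StrictMono t)
    (htper : ∀ j : ℕ, t (j + hbar) = t j + t hbar)
    (hAd : ∀ x0 : H, (UadFrom T t hbar B 0 x0).Nonempty)
    (ℓ : ℕ) (y : H) : (UadFrom T t hbar B ℓ y).Nonempty := by
  have hmul : ∀ (q : ℕ) (z : H), (UadFrom T t hbar B (hbar * q) z).Nonempty := by
    intro q
    induction q with
    | zero => intro z; simpa using hAd z
    | succ q ih =>
      intro z
      have := uad_shift_up T t hbar B hhbar htper (hbar * q) z (ih z)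
      rwa [show hbar * q + hbar = hbar * (q + 1) by ring] at this
  have hle : ℓ ≤ hbar * ℓ := Nat.le_mul_of_pos_left ℓ hhbar
  obtain ⟨d, hd⟩ := Nat.exists_eq_add_of_le hle
  apply uad_down T t hbar B hT0 hTadd htmono d ℓ y
  have := hmul ℓ (T (t (ℓ + d) - t ℓ) y)
  rwa [hd] at this

lemma periodic_reduce {E : Type*} [NormedAddCommGroup E] (hbar : ℕ) (hhbar : 0 < hbar)
    (P : ℕ → E) (hper : ∀ j : ℕ, 1 ≤ j → P (j + hbar) = P j) :
    ∀ j, 1 ≤ j → ∃ i, 1 ≤ i ∧ i ≤ hbar ∧ P j = P i := by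
  intro j
  induction j using Nat.strong_induction_on with
  | _ j ih =>
    intro hj
    by_cases hle : j ≤ hbar
    · exact ⟨j, hj, hle, rfl⟩
    · obtain ⟨i, h1, h2, h3⟩ := ih (j - hbar) (by omega) (by omega)
      refine ⟨i, h1, h2, ?_⟩
      rw [← h3, ← hper (j - hbar) (by omega), show j - hbar + hbar = j by omega]

lemma periodic_norm_bound {E : Type*} [NormedAddCommGroup E] (hbar : ℕ) (hhbar : 0 < hbar)
    (P : ℕ → E) (hper : ∀ j : ℕ, 1 ≤ j → P (j + hbar) = P j) :
    ∃ C : ℝ, 0 ≤ C ∧ ∀ j, 1 ≤ j → ‖P j‖ ≤ C := by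
  refine ⟨∑ i ∈ Finset.Icc 1 hbar, ‖P i‖, Finset.sum_nonneg (fun i _ => norm_nonneg _), ?_⟩
  intro j hj
  obtain ⟨i, h1, h2, h3⟩ := periodic_reduce hbar hhbar P hper j hj
  rw [h3]
  exact Finset.single_le_sum (f := fun i => ‖P i‖) (fun i _ => norm_nonneg _)
    (Finset.mem_Icc.mpr ⟨h1, h2⟩)

lemma inner_op_le {E : Type*} [NormedAddCommGroup E] [InnerProductSpace ℝ E]
    (P : E →L[ℝ] E) (C : ℝ) (hC : ‖P‖ ≤ C) (x : E) : ⟪P x, x⟫ ≤ C * ‖x‖ ^ 2 := by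
  calc ⟪P x, x⟫ ≤ ‖P x‖ * ‖x‖ := real_inner_le_norm _ _
    _ ≤ (‖P‖ * ‖x‖) * ‖x‖ :=
        mul_le_mul_of_nonneg_right (P.le_opNorm x) (norm_nonneg _)
    _ ≤ (C * ‖x‖) * ‖x‖ :=
        mul_le_mul_of_nonneg_right
          (mul_le_mul_of_nonneg_right hC (norm_nonneg _)) (norm_nonneg _)
    _ = C * ‖x‖ ^ 2 := by ring

/-- the cost of an admissible control is summable -/
lemma cost_summable (Q : ℕ → H →L[ℝ] H) (R : ℕ → U →L[ℝ] U)
    (hQ : MemMCoercive hbar Q) (hR : MemMCoercive hbar R) (hhbar : 0 < hbar)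
    (ℓ : ℕ) (x0 : H) (u : ℕ → U) (hu : u ∈ UadFrom T t hbar B ℓ x0) :
    Summable (fun m : ℕ =>
      (⟪Q (ℓ + m + 1) (xtrajFrom T t hbar B ℓ x0 u (m + 1)), xtrajFrom T t hbar B ℓ x0 u (m + 1)⟫
        + ⟪R (ℓ + m + 1) (u (ℓ + m + 1)), u (ℓ + m + 1)⟫)) := by
  obtain ⟨Cq, hCq0, hCq⟩ := periodic_norm_bound hbar hhbar Q hQ.2
  obtain ⟨Cr, hCr0, hCr⟩ := periodic_norm_bound hbar hhbar R hR.2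
  have hbig : Summable (fun m : ℕ =>
      Cq * ‖xtrajFrom T t hbar B ℓ x0 u (m + 1)‖ ^ 2 + Cr * ‖u (ℓ + m + 1)‖ ^ 2) :=
    Summable.add (hu.2.mul_left Cq) (hu.1.mul_left Cr)
  refine hbig.of_nonneg_of_le (fun m => ?_) (fun m => ?_)
  · exact add_nonneg ((hQ.1 _ (by omega)).1.2 _) ((hR.1 _ (by omega)).1.2 _)
  · exact add_le_add (inner_op_le _ _ (hCq _ (by omega)) _)
      (inner_op_le _ _ (hCr _ (by omega)) _)

/-- tail of an admissible control is admissible -/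
lemma uad_tail (ℓ n0 : ℕ) (x0 : H) (u : ℕ → U) (hu : u ∈ UadFrom T t hbar B ℓ x0) :
    u ∈ UadFrom T t hbar B (ℓ + n0) (xplusFrom T t hbar B ℓ x0 u n0) := by
  constructor
  · have e : ∀ j : ℕ, ℓ + n0 + j + 1 = ℓ + (j + n0) + 1 := fun j => by omega
    simp only [e]
    exact (summable_nat_add_iff
      (f := fun j : ℕ => ‖u (ℓ + j + 1)‖ ^ 2) n0).mpr hu.1
  · have e : ∀ j : ℕ, xtrajFrom T t hbar B (ℓ + n0) (xplusFrom T t hbar B ℓ x0 u n0) u (j + 1)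
        = xtrajFrom T t hbar B ℓ x0 u (j + n0 + 1) := by
      intro j
      rw [xtrajFrom_shift]
      congr 1
      omega
    simp only [e]
    exact (summable_nat_add_iff
      (f := fun j : ℕ => ‖xtrajFrom T t hbar B ℓ x0 u (j + 1)‖ ^ 2) n0).mpr hu.2


lemma sum_Icc_one (f : ℕ → ℝ) (n : ℕ) :
    ∑ m ∈ Finset.Icc 1 n, f m = ∑ m ∈ Finset.range n, f (m + 1) := by
  induction n with
  | zero => simp
  | succ n ih => rw [Finset.sum_Icc_succ_top (by omega), ih, Finset.sum_range_succ]

lemma jinf_nonneg (Q : ℕ → H →L[ℝ] H) (R : ℕ → U →L[ℝ] U)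
    (hQ : MemMCoercive hbar Q) (hR : MemMCoercive hbar R) (ℓ : ℕ) (x0 : H) (u : ℕ → U) :
    0 ≤ Jinf T t hbar B Q R ℓ x0 u :=
  tsum_nonneg fun m => add_nonneg ((hQ.1 _ (by omega)).1.2 _) ((hR.1 _ (by omega)).1.2 _)

lemma jinf_congr (Q : ℕ → H →L[ℝ] H) (R : ℕ → U →L[ℝ] U) (ℓ : ℕ) (x0 : H) (u v : ℕ → U)
    (h : ∀ i, ℓ < i → u i = v i) :
    Jinf T t hbar B Q R ℓ x0 u = Jinf T t hbar B Q R ℓ x0 v := by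
  unfold Jinf
  apply tsum_congr
  intro m
  rw [xtrajFrom_congr T t hbar B ℓ x0 u v m (fun i h1 _ => h i h1),
      h (ℓ + m + 1) (by omega)]

lemma jinf_split (Q : ℕ → H →L[ℝ] H) (R : ℕ → U →L[ℝ] U)
    (hQ : MemMCoercive hbar Q) (hR : MemMCoercive hbar R) (hhbar : 0 < hbar)
    (ℓ n0 : ℕ) (x0 : H) (u : ℕ → U) (hu : u ∈ UadFrom T t hbar B ℓ x0) :
    Jinf T t hbar B Q R ℓ x0 u
      = (∑ m ∈ Finset.Icc 1 n0,
          (⟪Q (ℓ + m) (xtrajFrom T t hbar B ℓ x0 u m), xtrajFrom T t hbar B ℓ x0 u m⟫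
            + ⟪R (ℓ + m) (u (ℓ + m)), u (ℓ + m)⟫))
        + Jinf T t hbar B Q R (ℓ + n0) (xplusFrom T t hbar B ℓ x0 u n0) u := by
  have hsum := cost_summable T t hbar B Q R hQ hR hhbar ℓ x0 u hu
  unfold Jinf
  rw [← Summable.sum_add_tsum_nat_add n0 hsum]
  congr 1
  · rw [sum_Icc_one]
    exact Finset.sum_congr rfl fun m _ => rfl
  · apply tsum_congr
    intro m
    rw [show ℓ + (m + n0) + 1 = ℓ + n0 + m + 1 by omega,
        show m + n0 + 1 = n0 + m + 1 by omega,
        ← xtrajFrom_shift T t hbar B ℓ n0 x0 u m]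

end Aux

/-- Lemma 2.6: the dynamic programming principle for the discrete infinite-horizon
LQ problem. -/
theorem dynamic_programming_principle
    {H U : Type*} [NormedAddCommGroup H] [InnerProductSpace ℝ H]
    [CompleteSpace H] [NormedAddCommGroup U] [InnerProductSpace ℝ U] [CompleteSpace U]
    (T : ℝ → H →L[ℝ] H) (hT0 : T 0 = 1)
    (hTadd : ∀ a b : ℝ, 0 ≤ a → 0 ≤ b → T (a + b) = T a ∘L T b)
    (hTcont : ∀ x : H, ContinuousOn (fun τ : ℝ => T τ x) (Set.Ici (0 : ℝ)))
    (hbar : ℕ) (hhbar : 0 < hbar)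
    (t : ℕ → ℝ) (ht0 : t 0 = 0) (htmono : StrictMono t)
    (htper : ∀ j : ℕ, t (j + hbar) = t j + t hbar)
    (B : ℕ → U →L[ℝ] H)
    (Q : ℕ → H →L[ℝ] H) (R : ℕ → U →L[ℝ] U)
    (hQ : MemMCoercive hbar Q) (hR : MemMCoercive hbar R)
    (hAd : ∀ x0 : H, (UadFrom T t hbar B 0 x0).Nonempty) :
    ∀ ℓ k : ℕ, ℓ < k → ∀ x0 : H,
      Vinf T t hbar B Q R ℓ x0 =
        sInf {c : ℝ | ∃ u : ℕ → U, Summable (fun j : ℕ => ‖u (ℓ + j + 1)‖ ^ 2) ∧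
          c = (∑ m ∈ Finset.Icc 1 (k - ℓ),
                (⟪Q (ℓ + m) (xtrajFrom T t hbar B ℓ x0 u m), xtrajFrom T t hbar B ℓ x0 u m⟫
                  + ⟪R (ℓ + m) (u (ℓ + m)), u (ℓ + m)⟫))
              + Vinf T t hbar B Q R k (xplusFrom T t hbar B ℓ x0 u (k - ℓ))} := by
  intro ℓ k hk x0
  obtain ⟨n0, rfl⟩ : ∃ n0, k = ℓ + n0 := ⟨k - ℓ, by omega⟩
  have hn0 : 1 ≤ n0 := by omega
  have huad : ∀ (ℓ' : ℕ) (y : H), (UadFrom T t hbar B ℓ' y).Nonempty :=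
    uad_nonempty T t hbar B hT0 hTadd hhbar htmono htper hAd
  have hjnn : ∀ (ℓ' : ℕ) (y : H) (u : ℕ → U), 0 ≤ Jinf T t hbar B Q R ℓ' y u :=
    fun ℓ' y u => jinf_nonneg T t hbar B Q R hQ hR ℓ' y u
  have hbdd : ∀ (ℓ' : ℕ) (y : H), BddBelow {c : ℝ |
      ∃ u ∈ UadFrom T t hbar B ℓ' y, c = Jinf T t hbar B Q R ℓ' y u} :=
    fun ℓ' y => ⟨0, fun c hc => by obtain ⟨u, _, rfl⟩ := hc; exact hjnn ℓ' y u⟩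
  have hvnn : ∀ (ℓ' : ℕ) (y : H), 0 ≤ Vinf T t hbar B Q R ℓ' y :=
    fun ℓ' y => Real.sInf_nonneg (fun c hc => by obtain ⟨u, _, rfl⟩ := hc; exact hjnn ℓ' y u)
  have hvle : ∀ (ℓ' : ℕ) (y : H) (u : ℕ → U), u ∈ UadFrom T t hbar B ℓ' y →
      Vinf T t hbar B Q R ℓ' y ≤ Jinf T t hbar B Q R ℓ' y u :=
    fun ℓ' y u hu => csInf_le (hbdd ℓ' y) ⟨u, hu, rfl⟩
  simp only [Nat.add_sub_cancel_left]
  have hFSnn : ∀ (u : ℕ → U), 0 ≤ ∑ m ∈ Finset.Icc 1 n0,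
      (⟪Q (ℓ + m) (xtrajFrom T t hbar B ℓ x0 u m), xtrajFrom T t hbar B ℓ x0 u m⟫
        + ⟪R (ℓ + m) (u (ℓ + m)), u (ℓ + m)⟫) := by
    intro u
    refine Finset.sum_nonneg fun m hm => ?_
    have hm1 := (Finset.mem_Icc.mp hm).1
    exact add_nonneg ((hQ.1 _ (by omega)).1.2 _) ((hR.1 _ (by omega)).1.2 _)
  have hS2bdd : BddBelow {c : ℝ | ∃ u : ℕ → U, Summable (fun j : ℕ => ‖u (ℓ + j + 1)‖ ^ 2) ∧
      c = (∑ m ∈ Finset.Icc 1 n0,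
            (⟪Q (ℓ + m) (xtrajFrom T t hbar B ℓ x0 u m), xtrajFrom T t hbar B ℓ x0 u m⟫
              + ⟪R (ℓ + m) (u (ℓ + m)), u (ℓ + m)⟫))
          + Vinf T t hbar B Q R (ℓ + n0) (xplusFrom T t hbar B ℓ x0 u n0)} := by
    refine ⟨0, fun c hc => ?_⟩
    obtain ⟨u, hu1, rfl⟩ := hc
    exact add_nonneg (hFSnn u) (hvnn _ _)
  apply le_antisymm
  · -- Vinf ℓ ≤ sInf S2
    apply le_csInf
    · refine ⟨_, ⟨(fun _ => 0), ?_, rfl⟩⟩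
      convert summable_zero with j
      simp
    · rintro c ⟨u, hu1, rfl⟩
      set y := xplusFrom T t hbar B ℓ x0 u n0 with hy
      obtain ⟨w0, hw0⟩ := huad (ℓ + n0) y
      have h3ne : {c : ℝ | ∃ w ∈ UadFrom T t hbar B (ℓ + n0) y,
          c = Jinf T t hbar B Q R (ℓ + n0) y w}.Nonempty := ⟨_, w0, hw0, rfl⟩
      have key : ∀ b ∈ {c : ℝ | ∃ w ∈ UadFrom T t hbar B (ℓ + n0) y,
          c = Jinf T t hbar B Q R (ℓ + n0) y w},
          Vinf T t hbar B Q R ℓ x0 ≤ (∑ m ∈ Finset.Icc 1 n0,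
            (⟪Q (ℓ + m) (xtrajFrom T t hbar B ℓ x0 u m), xtrajFrom T t hbar B ℓ x0 u m⟫
              + ⟪R (ℓ + m) (u (ℓ + m)), u (ℓ + m)⟫)) + b := by
        rintro b ⟨w, hw, rfl⟩
        set v : ℕ → U := fun j => if j ≤ ℓ + n0 then u j else w j with hv
        have hveq_le : ∀ i, i ≤ ℓ + n0 → v i = u i := fun i hi => if_pos hi
        have hveq_gt : ∀ i, ℓ + n0 < i → v i = w i := fun i hi => if_neg (by omega)
        have hx : xplusFrom T t hbar B ℓ x0 v n0 = y := by
          rw [hy]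
          exact xplusFrom_congr T t hbar B ℓ x0 v u n0 (fun i _ h2 => hveq_le i h2)
        have htrv : ∀ j : ℕ, xtrajFrom T t hbar B ℓ x0 v (j + n0 + 1)
            = xtrajFrom T t hbar B (ℓ + n0) y w (j + 1) := by
          intro j
          rw [show j + n0 + 1 = n0 + j + 1 by omega,
              ← xtrajFrom_shift T t hbar B ℓ n0 x0 v j, hx]
          exact xtrajFrom_congr T t hbar B (ℓ + n0) y v w j (fun i h1 _ => hveq_gt i h1)
        have hvad : v ∈ UadFrom T t hbar B ℓ x0 := by
          constructor
          · rw [← summable_nat_add_iff (f := fun j : ℕ => ‖v (ℓ + j + 1)‖ ^ 2) n0]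
            show Summable fun j : ℕ => ‖v (ℓ + (j + n0) + 1)‖ ^ 2
            have e : ∀ j : ℕ, v (ℓ + (j + n0) + 1) = w (ℓ + n0 + j + 1) := by
              intro j
              rw [hveq_gt _ (by omega)]
              congr 1
              omega
            simp only [e]
            exact hw.1
          · rw [← summable_nat_add_iff
              (f := fun j : ℕ => ‖xtrajFrom T t hbar B ℓ x0 v (j + 1)‖ ^ 2) n0]
            show Summable fun j : ℕ => ‖xtrajFrom T t hbar B ℓ x0 v (j + n0 + 1)‖ ^ 2
            simp only [htrv]
            exact hw.2
        have hsplit := jinf_split T t hbar B Q R hQ hR hhbar ℓ n0 x0 v hvad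
        have hFS : (∑ m ∈ Finset.Icc 1 n0,
            (⟪Q (ℓ + m) (xtrajFrom T t hbar B ℓ x0 v m), xtrajFrom T t hbar B ℓ x0 v m⟫
              + ⟪R (ℓ + m) (v (ℓ + m)), v (ℓ + m)⟫))
            = ∑ m ∈ Finset.Icc 1 n0,
            (⟪Q (ℓ + m) (xtrajFrom T t hbar B ℓ x0 u m), xtrajFrom T t hbar B ℓ x0 u m⟫
              + ⟪R (ℓ + m) (u (ℓ + m)), u (ℓ + m)⟫) := by
          refine Finset.sum_congr rfl fun m hm => ?_
          obtain ⟨hm1, hm2⟩ := Finset.mem_Icc.mp hm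
          obtain ⟨m', rfl⟩ : ∃ m', m = m' + 1 := ⟨m - 1, by omega⟩
          rw [xtrajFrom_congr T t hbar B ℓ x0 v u m' (fun i _ h2 => hveq_le i (by omega)),
              hveq_le (ℓ + (m' + 1)) (by omega)]
        have htail : Jinf T t hbar B Q R (ℓ + n0) (xplusFrom T t hbar B ℓ x0 v n0) v
            = Jinf T t hbar B Q R (ℓ + n0) y w := by
          rw [hx]
          exact jinf_congr T t hbar B Q R (ℓ + n0) y v w (fun i hi => hveq_gt i hi)
        calc Vinf T t hbar B Q R ℓ x0 ≤ Jinf T t hbar B Q R ℓ x0 v := hvle ℓ x0 v hvad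
          _ = _ + _ := hsplit
          _ = _ := by rw [hFS, htail]
      have hstep : Vinf T t hbar B Q R ℓ x0 - (∑ m ∈ Finset.Icc 1 n0,
          (⟪Q (ℓ + m) (xtrajFrom T t hbar B ℓ x0 u m), xtrajFrom T t hbar B ℓ x0 u m⟫
            + ⟪R (ℓ + m) (u (ℓ + m)), u (ℓ + m)⟫))
          ≤ sInf {c : ℝ | ∃ w ∈ UadFrom T t hbar B (ℓ + n0) y,
            c = Jinf T t hbar B Q R (ℓ + n0) y w} :=
        le_csInf h3ne fun b hb => by linarith [key b hb]
      have hVdef : Vinf T t hbar B Q R (ℓ + n0) y = sInf {c : ℝ |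
          ∃ w ∈ UadFrom T t hbar B (ℓ + n0) y, c = Jinf T t hbar B Q R (ℓ + n0) y w} := rfl
      rw [hVdef]
      linarith
  · -- sInf S2 ≤ Vinf ℓ
    apply le_csInf
    · obtain ⟨u, hu⟩ := huad ℓ x0
      exact ⟨_, u, hu, rfl⟩
    · rintro a ⟨u, hu, rfl⟩
      have hsplit := jinf_split T t hbar B Q R hQ hR hhbar ℓ n0 x0 u hu
      have htmem : u ∈ UadFrom T t hbar B (ℓ + n0) (xplusFrom T t hbar B ℓ x0 u n0) :=
        uad_tail T t hbar B ℓ n0 x0 u hu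
      have h1 : Vinf T t hbar B Q R (ℓ + n0) (xplusFrom T t hbar B ℓ x0 u n0)
          ≤ Jinf T t hbar B Q R (ℓ + n0) (xplusFrom T t hbar B ℓ x0 u n0) u :=
        hvle _ _ u htmem
      have h2 := csInf_le hS2bdd ⟨u, hu.1, rfl⟩
      linarith

end ImpulseControl
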